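/- Let $a, b : \mathbb{Z} \to \mathbb{Z}$ be sequences with values in $\{1, 2\}$, chosen i.i.d. uniformly and independently of each other. For $N \ge 1$, the probability that there exist integers $s, t \in [-100N, 100N]$ and $K > N$ such that the shifted length-$K$ words $(a_{s+1}, \dots, a_{s+K})$ and $(b_{t+1}, \dots, b_{t+K})$ have a common subsequence of length at least $0.99K$ is at most $e^{-rN}$ for some absolute constant $r > 0$ and all sufficiently large $N$. -/

import Mathlib

/-!
If the index maps are injective, the words `a ∘ x` and `b ∘ y` of length `j` agree letter by
letter with probability `2⁻ʲ`, and a common subsequence of length `j` of two words of length `K`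
is such an agreement for one of at most `C(K, j)²` pairs of strictly increasing index maps.
For `j ≥ 0.99 K`, one term of the binomial expansion of `(1 + 1/4)ᴷ` bounds
`C(K, j) = C(K, K - j)` by `(5/4)ᴷ 4ᴷ⁻ʲ`, so that `C(K, j)² 2⁻ʲ ≤ (13/16)ᴷ`. Summing over `j`,
over `K > N` and over the `(200 N + 1)²` pairs of shifts leaves a polynomial in `N` times
`(7/8)ᴺ`, which is eventually below `e^{-N/16}`.
-/

open MeasureTheory ProbabilityTheory Filter Finset
open scoped ENNReal

def HasCommonSubseq {α : Type*} {K : ℕ} (u v : Fin K → α) (j : ℕ) : Prop :=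
  ∃ n m : Fin j → Fin K, StrictMono n ∧ StrictMono m ∧ ∀ i, u (n i) = v (m i)

lemma HasCommonSubseq.le {α : Type*} {K j : ℕ} {u v : Fin K → α} (h : HasCommonSubseq u v j) :
    j ≤ K := by
  obtain ⟨n, -, hn, -⟩ := h
  simpa using Fintype.card_le_of_injective n hn.injective

lemma card_strictMono_le_choose (j K : ℕ) [DecidablePred (StrictMono : (Fin j → Fin K) → Prop)] :
    Fintype.card {n : Fin j → Fin K // StrictMono n} ≤ K.choose j := by
  have hcard (n : {n : Fin j → Fin K // StrictMono n}) : #(univ.image n.1) = j := by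
    rw [card_image_of_injective _ n.2.injective, card_univ, Fintype.card_fin]
  calc Fintype.card {n : Fin j → Fin K // StrictMono n}
      ≤ Fintype.card (powersetCard j (univ : Finset (Fin K))) := by
        refine Fintype.card_le_of_injective
          (fun n => ⟨univ.image n.1, mem_powersetCard.2 ⟨subset_univ _, hcard n⟩⟩) ?_
        intro n m hnm
        refine Subtype.ext ((n.2.range_inj m.2).1 ?_)
        simpa using congrArg (fun s : powersetCard j univ => (s.1 : Set (Fin K))) hnm
    _ = K.choose j := by simp

lemma choose_mul_pow_le_one_add_pow {x : ℝ} (hx : 0 ≤ x) (n k : ℕ) :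
    (n.choose k : ℝ) * x ^ k ≤ (1 + x) ^ n := by
  rcases le_or_gt k n with hk | hk
  · rw [add_comm, add_pow]
    refine le_trans ?_ (single_le_sum (f := fun m => x ^ m * 1 ^ (n - m) * (n.choose m : ℝ))
      (fun m _ => by positivity) (mem_range.2 (Nat.lt_succ_of_le hk)))
    simp [mul_comm]
  · simp [Nat.choose_eq_zero_of_lt hk, pow_nonneg (by linarith : (0 : ℝ) ≤ 1 + x)]

lemma choose_sq_mul_half_pow_le {K j : ℕ} (hj : j ≤ K) (hKj : 99 * K ≤ 100 * j) :
    (K.choose j : ℝ) ^ 2 * (1 / 2) ^ j ≤ (13 / 16) ^ K := by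
  obtain ⟨d, rfl⟩ : ∃ d, K = j + d := ⟨K - j, by omega⟩
  have hchoose : ((j + d).choose j : ℝ) ≤ (5 / 4) ^ (j + d) * 4 ^ d := by
    have h := choose_mul_pow_le_one_add_pow (x := 1 / 4) (by norm_num) (j + d) d
    rw [← Nat.choose_symm_add, ← le_div_iff₀ (by positivity), div_eq_mul_inv, ← inv_pow] at h
    norm_num at h
    exact h
  have h32 : (32 : ℝ) ^ d ≤ (26 / 25) ^ (j + d) :=
    calc (32 : ℝ) ^ d ≤ ((26 / 25) ^ 100) ^ d := pow_le_pow_left₀ (by norm_num) (by norm_num) d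
      _ = (26 / 25) ^ (100 * d) := (pow_mul _ _ _).symm
      _ ≤ (26 / 25) ^ (j + d) := pow_le_pow_right₀ (by norm_num) (by omega)
  have hhalf : (1 / 2 : ℝ) ^ j = (1 / 2) ^ (j + d) * 2 ^ d := by
    rw [pow_add, mul_assoc, ← mul_pow]; norm_num
  have regroup (p q r : ℝ) : (p ^ (j + d) * q ^ d) ^ 2 * (r ^ (j + d) * 2 ^ d)
      = (p ^ 2 * r) ^ (j + d) * (q ^ 2 * 2) ^ d := by
    ring
  calc ((j + d).choose j : ℝ) ^ 2 * (1 / 2) ^ j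
      ≤ ((5 / 4) ^ (j + d) * 4 ^ d) ^ 2 * (1 / 2) ^ j := by gcongr
    _ = (25 / 32) ^ (j + d) * 32 ^ d := by rw [hhalf, regroup]; norm_num
    _ ≤ (25 / 32) ^ (j + d) * (26 / 25) ^ (j + d) := by gcongr
    _ = (13 / 16) ^ (j + d) := by rw [← mul_pow]; norm_num

lemma succ_mul_pow_le (K : ℕ) : (K + 1 : ℝ) * (13 / 16) ^ K ≤ 13 * (7 / 8) ^ K := by
  have h := one_add_mul_le_pow (a := (1 / 13 : ℝ)) (by norm_num) K
  calc (K + 1 : ℝ) * (13 / 16) ^ K ≤ 13 * (14 / 13) ^ K * (13 / 16) ^ K := by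
        gcongr
        norm_num at h
        linarith
    _ = 13 * (7 / 8) ^ K := by rw [mul_assoc, ← mul_pow]; norm_num

section Probability

variable {Ω ι α : Type*} [MeasurableSpace Ω] {μ : Measure Ω}
  [Fintype α] [MeasurableSpace α] [MeasurableSingletonClass α]

structure IndepUniformWords (μ : Measure Ω) (a b : ι → Ω → α) : Prop where
  indep : iIndepFun (Sum.elim a b) μ
  uniform_left : ∀ i v, μ {ω | a i ω = v} = (Fintype.card α : ℝ≥0∞)⁻¹
  uniform_right : ∀ i v, μ {ω | b i ω = v} = (Fintype.card α : ℝ≥0∞)⁻¹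

lemma measure_forall_eq_of_iIndepFun {κ : Type*} [Fintype κ] {g : κ → Ω → α}
    (hg : iIndepFun g μ) (hu : ∀ k v, μ {ω | g k ω = v} = (Fintype.card α : ℝ≥0∞)⁻¹)
    (w : κ → α) :
    μ {ω | ∀ k, g k ω = w k} = (Fintype.card α : ℝ≥0∞)⁻¹ ^ Fintype.card κ := by
  have h := hg.measure_inter_preimage_eq_mul univ (sets := fun k => {w k})
    (fun k _ => measurableSet_singleton _)
  simp only [mem_univ, Set.iInter_true] at h
  convert h using 2
  · ext ω; simp
  · simp [Set.preimage, hu]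

lemma IndepUniformWords.measure_forall_eq_le [Nonempty α] {a b : ι → Ω → α}
    (h : IndepUniformWords μ a b) {j : ℕ} {x y : Fin j → ι}
    (hx : Function.Injective x) (hy : Function.Injective y) :
    μ {ω | ∀ i, a (x i) ω = b (y i) ω} ≤ (Fintype.card α : ℝ≥0∞)⁻¹ ^ j := by
  set q := (Fintype.card α : ℝ≥0∞)
  set g : Fin j ⊕ Fin j → Ω → α := fun o => Sum.elim a b (Sum.map x y o)
  have hg : iIndepFun g μ := h.indep.precomp (Sum.map_injective.2 ⟨hx, hy⟩)
  have hu : ∀ o v, μ {ω | g o ω = v} = q⁻¹ := by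
    rintro (i | i) v
    exacts [h.uniform_left _ v, h.uniform_right _ v]
  have hq : q ≠ 0 := by simp [q]
  calc μ {ω | ∀ i, a (x i) ω = b (y i) ω}
      ≤ μ (⋃ v : Fin j → α, {ω | ∀ o, g o ω = Sum.elim v v o}) := by
        refine measure_mono fun ω hω => Set.mem_iUnion.2 ⟨fun i => a (x i) ω, ?_⟩
        rintro (i | i)
        exacts [rfl, (hω i).symm]
    _ ≤ ∑ v : Fin j → α, μ {ω | ∀ o, g o ω = Sum.elim v v o} := measure_iUnion_fintype_le _ _
    _ = q ^ j * q⁻¹ ^ j * q⁻¹ ^ j := by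
        simp only [measure_forall_eq_of_iIndepFun hg hu, sum_const, card_univ, Fintype.card_fun,
          Fintype.card_sum, Fintype.card_fin, nsmul_eq_mul, Nat.cast_pow, pow_add, mul_assoc, q]
    _ = q⁻¹ ^ j := by
        rw [← mul_pow, ENNReal.mul_inv_cancel hq (ENNReal.natCast_ne_top _), one_pow, one_mul]

lemma IndepUniformWords.measure_hasCommonSubseq_le [Nonempty α] {a b : ι → Ω → α}
    (h : IndepUniformWords μ a b) {K : ℕ} {x y : Fin K → ι}
    (hx : Function.Injective x) (hy : Function.Injective y) (j : ℕ) :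
    μ {ω | HasCommonSubseq (fun k => a (x k) ω) (fun k => b (y k) ω) j}
      ≤ (K.choose j : ℝ≥0∞) ^ 2 * (Fintype.card α : ℝ≥0∞)⁻¹ ^ j := by
  classical
  let M := {n : Fin j → Fin K // StrictMono n}
  calc μ {ω | HasCommonSubseq (fun k => a (x k) ω) (fun k => b (y k) ω) j}
      ≤ μ (⋃ p : M × M, {ω | ∀ i, a (x (p.1.1 i)) ω = b (y (p.2.1 i)) ω}) := by
        refine measure_mono ?_
        rintro ω ⟨n, m, hn, hm, hnm⟩
        exact Set.mem_iUnion.2 ⟨(⟨n, hn⟩, ⟨m, hm⟩), hnm⟩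
    _ ≤ ∑ p : M × M, μ {ω | ∀ i, a (x (p.1.1 i)) ω = b (y (p.2.1 i)) ω} :=
        measure_iUnion_fintype_le _ _
    _ ≤ ∑ _p : M × M, (Fintype.card α : ℝ≥0∞)⁻¹ ^ j :=
        sum_le_sum fun p _ => h.measure_forall_eq_le (hx.comp p.1.2.injective)
          (hy.comp p.2.2.injective)
    _ ≤ (K.choose j : ℝ≥0∞) ^ 2 * (Fintype.card α : ℝ≥0∞)⁻¹ ^ j := by
        rw [sum_const, card_univ, Fintype.card_prod, nsmul_eq_mul, ← sq, Nat.cast_pow]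
        gcongr
        exact card_strictMono_le_choose j K

lemma IndepUniformWords.measure_hasCommonSubseq_le_pow {a b : ι → Ω → α}
    (h : IndepUniformWords μ a b) (hα : 2 ≤ Fintype.card α) {K j : ℕ} {x y : Fin K → ι}
    (hx : Function.Injective x) (hy : Function.Injective y) (hj : j ≤ K)
    (hKj : 99 * K ≤ 100 * j) :
    μ {ω | HasCommonSubseq (fun k => a (x k) ω) (fun k => b (y k) ω) j}
      ≤ ENNReal.ofReal ((13 / 16) ^ K) := by
  have : Nonempty α := Fintype.card_pos_iff.1 (by omega)
  calc μ {ω | HasCommonSubseq (fun k => a (x k) ω) (fun k => b (y k) ω) j}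
      ≤ (K.choose j : ℝ≥0∞) ^ 2 * (Fintype.card α : ℝ≥0∞)⁻¹ ^ j :=
        h.measure_hasCommonSubseq_le hx hy j
    _ ≤ (K.choose j : ℝ≥0∞) ^ 2 * 2⁻¹ ^ j := by
        gcongr
        exact_mod_cast hα
    _ = ENNReal.ofReal ((K.choose j : ℝ) ^ 2 * (1 / 2) ^ j) := by
        rw [ENNReal.ofReal_mul (by positivity), ENNReal.ofReal_pow (by positivity),
          ENNReal.ofReal_pow (by positivity), ENNReal.ofReal_natCast, one_div,
          ENNReal.ofReal_inv_of_pos two_pos, ENNReal.ofReal_ofNat]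
    _ ≤ ENNReal.ofReal ((13 / 16) ^ K) :=
        ENNReal.ofReal_le_ofReal (choose_sq_mul_half_pow_le hj hKj)

lemma IndepUniformWords.measure_longCommonSubseq_le {a b : ι → Ω → α}
    (h : IndepUniformWords μ a b) (hα : 2 ≤ Fintype.card α) {K : ℕ} {x y : Fin K → ι}
    (hx : Function.Injective x) (hy : Function.Injective y) :
    μ {ω | ∃ j : ℕ, (0.99 : ℝ) * K ≤ j ∧
        HasCommonSubseq (fun k => a (x k) ω) (fun k => b (y k) ω) j}
      ≤ ENNReal.ofReal (13 * (7 / 8) ^ K) := by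
  set J := (range (K + 1)).filter fun j => 99 * K ≤ 100 * j
  calc μ {ω | ∃ j : ℕ, (0.99 : ℝ) * K ≤ j ∧
        HasCommonSubseq (fun k => a (x k) ω) (fun k => b (y k) ω) j}
      ≤ μ (⋃ j ∈ J, {ω | HasCommonSubseq (fun k => a (x k) ω) (fun k => b (y k) ω) j}) := by
        refine measure_mono fun ω ⟨j, hKj, hω⟩ => Set.mem_biUnion ?_ hω
        have : (99 * K : ℝ) ≤ 100 * j := by linarith
        exact mem_filter.2 ⟨mem_range.2 (Nat.lt_succ_of_le hω.le), by exact_mod_cast this⟩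
    _ ≤ ∑ j ∈ J, μ {ω | HasCommonSubseq (fun k => a (x k) ω) (fun k => b (y k) ω) j} :=
        measure_biUnion_finset_le _ _
    _ ≤ ∑ _j ∈ J, ENNReal.ofReal ((13 / 16) ^ K) := sum_le_sum fun j hj => by
        rw [mem_filter, mem_range, Nat.lt_succ_iff] at hj
        exact h.measure_hasCommonSubseq_le_pow hα hx hy hj.1 hj.2
    _ ≤ (K + 1 : ℕ) * ENNReal.ofReal ((13 / 16) ^ K) := by
        rw [sum_const, nsmul_eq_mul]
        gcongr
        exact (card_filter_le _ _).trans (card_range _).le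
    _ = ENNReal.ofReal ((K + 1) * (13 / 16) ^ K) := by
        rw [ENNReal.ofReal_mul (by positivity), ← Nat.cast_succ, ENNReal.ofReal_natCast]
    _ ≤ ENNReal.ofReal (13 * (7 / 8) ^ K) := ENNReal.ofReal_le_ofReal (succ_mul_pow_le K)

lemma IndepUniformWords.measure_shifted_longCommonSubseq_le {a b : ℤ → Ω → α}
    (h : IndepUniformWords μ a b) (hα : 2 ≤ Fintype.card α) (s t : ℤ) (N : ℕ) :
    μ {ω | ∃ K : ℕ, N < K ∧ ∃ j : ℕ, (0.99 : ℝ) * K ≤ j ∧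
        HasCommonSubseq (fun k : Fin K => a (s + 1 + k) ω) (fun k : Fin K => b (t + 1 + k) ω) j}
      ≤ ENNReal.ofReal (91 * (7 / 8) ^ N) := by
  have hshift (c : ℤ) (K : ℕ) : Function.Injective fun k : Fin K => c + 1 + (k : ℤ) :=
    fun k l hkl => Fin.ext (by simpa using hkl)
  have hsum : Summable fun k : ℕ => 13 * (7 / 8 : ℝ) ^ (N + 1) * (7 / 8) ^ k :=
    (summable_geometric_of_lt_one (by norm_num) (by norm_num)).mul_left _
  calc μ {ω | ∃ K : ℕ, N < K ∧ ∃ j : ℕ, (0.99 : ℝ) * K ≤ j ∧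
        HasCommonSubseq (fun k : Fin K => a (s + 1 + k) ω) (fun k : Fin K => b (t + 1 + k) ω) j}
      ≤ μ (⋃ k : ℕ, {ω | ∃ j : ℕ, (0.99 : ℝ) * (N + 1 + k : ℕ) ≤ j ∧
          HasCommonSubseq (fun i : Fin (N + 1 + k) => a (s + 1 + i) ω)
            (fun i : Fin (N + 1 + k) => b (t + 1 + i) ω) j}) := by
        refine measure_mono fun ω ⟨K, hK, hω⟩ => ?_
        obtain ⟨k, rfl⟩ : ∃ k, K = N + 1 + k := ⟨K - (N + 1), by omega⟩
        exact Set.mem_iUnion.2 ⟨k, hω⟩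
    _ ≤ ∑' k : ℕ, ENNReal.ofReal (13 * (7 / 8) ^ (N + 1 + k)) :=
        (measure_iUnion_le _).trans (ENNReal.tsum_le_tsum fun k =>
          h.measure_longCommonSubseq_le hα (hshift s _) (hshift t _))
    _ = ENNReal.ofReal (∑' k : ℕ, 13 * (7 / 8 : ℝ) ^ (N + 1) * (7 / 8) ^ k) := by
        rw [ENNReal.ofReal_tsum_of_nonneg (fun _ => by positivity) hsum]
        simp only [pow_add, mul_assoc]
    _ = ENNReal.ofReal (91 * (7 / 8) ^ N) := by
        rw [tsum_mul_left, tsum_geometric_of_lt_one (by norm_num) (by norm_num), pow_succ]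
        ring_nf

end Probability

lemma eventually_sq_mul_pow_le_exp :
    ∀ᶠ N : ℕ in atTop, ((200 * N + 1 : ℕ) : ℝ) ^ 2 * (91 * (7 / 8) ^ N)
      ≤ Real.exp (-(1 / 16) * N) := by
  have hlim := tendsto_pow_const_mul_const_pow_of_abs_lt_one 2 (r := 14 / 15)
    (by norm_num [abs_of_pos])
  filter_upwards [hlim.eventually (ge_mem_nhds (show (0 : ℝ) < 1 / (201 ^ 2 * 91) by norm_num)),
    eventually_ge_atTop 1] with N hN hN1
  have hcount : (200 * N + 1 : ℝ) ≤ 201 * N := by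
    have : (1 : ℝ) ≤ N := by exact_mod_cast hN1
    linarith
  have hexp : (15 / 16 : ℝ) ≤ Real.exp (-(1 / 16)) := by
    linarith [Real.add_one_le_exp (-(1 / 16))]
  calc ((200 * N + 1 : ℕ) : ℝ) ^ 2 * (91 * (7 / 8) ^ N)
      ≤ (201 * N) ^ 2 * (91 * ((14 / 15) ^ N * (15 / 16) ^ N)) := by
        rw [← mul_pow]
        norm_num
        gcongr
    _ = (201 ^ 2 * 91) * ((N : ℝ) ^ 2 * (14 / 15) ^ N) * (15 / 16) ^ N := by ring
    _ ≤ 1 * Real.exp (-(1 / 16)) ^ N := by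
        gcongr
        rwa [← le_div_iff₀' (by norm_num)]
    _ = Real.exp (-(1 / 16) * N) := by rw [one_mul, ← Real.exp_nat_mul, mul_comm]

/-- Let `a b : ℤ → Ω → Fin 2` be i.i.d. uniform sequences (all coordinates of
`a` and `b` jointly independent and uniform on a two-letter alphabet). There is an absolute
constant `r > 0` such that for all sufficiently large `N`, the probability that there exist
shifts `s, t ∈ [-100N, 100N]` and a length `K > N` such that the words
`(a_{s+1}, …, a_{s+K})` and `(b_{t+1}, …, b_{t+K})` have a common subsequence of length at
least `0.99 K` is at most `e^{-rN}`. -/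
theorem stmt_17 : ∃ r : ℝ, 0 < r ∧ ∃ N₀ : ℕ, ∀ N : ℕ, N₀ ≤ N →
    ∀ {Ω : Type} [MeasurableSpace Ω] (μ : Measure Ω), IsProbabilityMeasure μ →
    ∀ (a b : ℤ → Ω → Fin 2),
    (∀ i, Measurable (a i)) → (∀ i, Measurable (b i)) →
    iIndepFun (m := fun _ : ℤ ⊕ ℤ => (inferInstance : MeasurableSpace (Fin 2)))
      (fun o : ℤ ⊕ ℤ => Sum.elim a b o) μ →
    (∀ (i : ℤ) (v : Fin 2), μ {ω | a i ω = v} = 1 / 2) →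
    (∀ (i : ℤ) (v : Fin 2), μ {ω | b i ω = v} = 1 / 2) →
    μ {ω | ∃ s t : ℤ, |s| ≤ 100 * (N : ℤ) ∧ |t| ≤ 100 * (N : ℤ) ∧
        ∃ K : ℕ, N < K ∧ ∃ j : ℕ, (0.99 : ℝ) * K ≤ (j : ℝ) ∧
          ∃ n m : Fin j → Fin K, StrictMono n ∧ StrictMono m ∧
            ∀ i : Fin j, a (s + 1 + (n i : ℤ)) ω = b (t + 1 + (m i : ℤ)) ω}
      ≤ ENNReal.ofReal (Real.exp (-r * N)) := by
  obtain ⟨N₀, hN₀⟩ := eventually_atTop.1 eventually_sq_mul_pow_le_exp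
  refine ⟨1 / 16, by norm_num, N₀, fun N hN Ω _ μ _ a b _ _ hindep ha hb => ?_⟩
  have hab : IndepUniformWords μ a b := ⟨hindep, by simpa using ha, by simpa using hb⟩
  set I := Icc (-(100 * N : ℤ)) (100 * N)
  calc μ {ω | ∃ s t : ℤ, |s| ≤ 100 * (N : ℤ) ∧ |t| ≤ 100 * (N : ℤ) ∧
        ∃ K : ℕ, N < K ∧ ∃ j : ℕ, (0.99 : ℝ) * K ≤ (j : ℝ) ∧
          ∃ n m : Fin j → Fin K, StrictMono n ∧ StrictMono m ∧
            ∀ i : Fin j, a (s + 1 + (n i : ℤ)) ω = b (t + 1 + (m i : ℤ)) ω}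
      ≤ μ (⋃ p ∈ I ×ˢ I, {ω | ∃ K : ℕ, N < K ∧ ∃ j : ℕ, (0.99 : ℝ) * K ≤ j ∧
          HasCommonSubseq (fun k : Fin K => a (p.1 + 1 + k) ω)
            (fun k : Fin K => b (p.2 + 1 + k) ω) j}) :=
        measure_mono fun ω ⟨s, t, hs, ht, hω⟩ => Set.mem_biUnion (x := (s, t))
          (mem_product.2 ⟨mem_Icc.2 (abs_le.1 hs), mem_Icc.2 (abs_le.1 ht)⟩) hω
    _ ≤ ∑ p ∈ I ×ˢ I, ENNReal.ofReal (91 * (7 / 8) ^ N) :=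
        (measure_biUnion_finset_le _ _).trans (sum_le_sum fun p _ =>
          hab.measure_shifted_longCommonSubseq_le (by simp) p.1 p.2 N)
    _ = ENNReal.ofReal (((200 * N + 1 : ℕ) : ℝ) ^ 2 * (91 * (7 / 8) ^ N)) := by
        have hI : #I = 200 * N + 1 := by simp only [I, Int.card_Icc]; omega
        rw [sum_const, card_product, hI, nsmul_eq_mul,
          ENNReal.ofReal_mul (p := _ ^ 2) (by positivity), ENNReal.ofReal_pow (by positivity),
          ENNReal.ofReal_natCast, Nat.cast_mul, sq]
    _ ≤ ENNReal.ofReal (Real.exp (-(1 / 16) * N)) := ENNReal.ofReal_le_ofReal (hN₀ N hN)
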